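/- arXiv:1402.4987 — 8 statements merged into one kernel-verified Lean document; each statement's English description precedes it below -/
import Mathlib

section
/- Let β > 0 and ζ > 0. Let b : [0,1] → ℝ be continuous with b(0) = 0, let g : [0,1] → ℝ be continuous and nonnegative, and let ξ : [0,1] → ℝ be continuous and positive such that for every t ∈ [0,1], ξ(t)^{1+β} = e^{-(3/2)(1+β)t + (1+β)b(t)} ζ^{1+β} + (1+β) ∫₀^t e^{-(3/2)(1+β)(t-s) + (1+β)(b(t)-b(s))} g(s) ds. Write b*_t = sup_{0≤s≤t} |b(s)|. Then for every t ∈ [0,1], inf_{0≤s≤t} ξ(s) ≥ e^{-(3/2)t - b*_t} ζ. -/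
open MeasureTheory Set Real

/- Discarding the nonnegative integral term leaves `ξ(s)^{1+β} ≥ (e^{-(3/2)s + b(s)} ζ)^{1+β}`,
so `ξ(s) ≥ e^{-(3/2)s + b(s)} ζ`; for `s ≤ t` the exponent is at least `-(3/2)t - b*_t`. -/

lemma le_of_rpow_eq_rpow_add {p A x R : ℝ} (hp : 0 < p) (hA : 0 ≤ A) (hx : 0 ≤ x) (hR : 0 ≤ R)
    (h : x ^ p = A ^ p + R) : A ≤ x :=
  (rpow_le_rpow_iff hA hx hp).mp (by linarith)

lemma exp_mul_rpow (a p : ℝ) {z : ℝ} (hz : 0 ≤ z) :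
    (exp a * z) ^ p = exp (p * a) * z ^ p := by
  rw [mul_rpow (exp_pos a).le hz, ← exp_mul, mul_comm a]

lemma exp_mul_le_of_rpow_eq_add_integral {p c ζ s x : ℝ} {b g : ℝ → ℝ}
    (hp : 0 < p) (hζ : 0 ≤ ζ) (hs : 0 ≤ s) (hg : ∀ u ∈ Icc 0 s, 0 ≤ g u) (hx : 0 ≤ x)
    (h : x ^ p = exp (c * p * s + p * b s) * ζ ^ p
      + p * ∫ u in (0:ℝ)..s, exp (c * p * (s - u) + p * (b s - b u)) * g u) :
    exp (c * s + b s) * ζ ≤ x := by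
  have hint : 0 ≤ ∫ u in (0:ℝ)..s, exp (c * p * (s - u) + p * (b s - b u)) * g u :=
    intervalIntegral.integral_nonneg hs fun u hu => mul_nonneg (exp_pos _).le (hg u hu)
  refine le_of_rpow_eq_rpow_add hp (by positivity) hx (mul_nonneg hp.le hint) ?_
  rw [h, exp_mul_rpow _ _ hζ]
  ring_nf

lemma le_sSup_image_of_continuousOn {f : ℝ → ℝ} {a t : ℝ} (hf : ContinuousOn f (Icc a t))
    {s : ℝ} (hs : s ∈ Icc a t) : f s ≤ sSup (f '' Icc a t) :=
  le_csSup (isCompact_Icc.bddAbove_image hf) (mem_image_of_mem f hs)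

theorem stmt_1_general (β ζ : ℝ) (hβ : 0 < β) (hζ : 0 < ζ)
    (b g ξ : ℝ → ℝ)
    (hb : ContinuousOn b (Icc 0 1))
    (hgpos : ∀ t ∈ Icc (0:ℝ) 1, 0 ≤ g t)
    (hξpos : ∀ t ∈ Icc (0:ℝ) 1, 0 < ξ t)
    (heq : ∀ t ∈ Icc (0:ℝ) 1,
      ξ t ^ (1 + β) =
        Real.exp (-(3/2) * (1 + β) * t + (1 + β) * b t) * ζ ^ (1 + β)
        + (1 + β) * ∫ s in (0:ℝ)..t,
            Real.exp (-(3/2) * (1 + β) * (t - s) + (1 + β) * (b t - b s)) * g s) :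
    ∀ t ∈ Icc (0:ℝ) 1,
      Real.exp (-(3/2) * t - sSup ((fun s => |b s|) '' Icc (0:ℝ) t)) * ζ
        ≤ sInf (ξ '' Icc (0:ℝ) t) := by
  intro t ht
  have hsub : Icc (0:ℝ) t ⊆ Icc 0 1 := Icc_subset_Icc le_rfl ht.2
  refine le_csInf ((nonempty_Icc.2 ht.1).image ξ) ?_
  rintro _ ⟨s, hs, rfl⟩
  have hbs : -b s ≤ sSup ((fun s => |b s|) '' Icc (0:ℝ) t) :=
    (neg_le_abs (b s)).trans (le_sSup_image_of_continuousOn (hb.mono hsub).abs hs)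
  calc exp (-(3/2) * t - sSup ((fun s => |b s|) '' Icc (0:ℝ) t)) * ζ
      ≤ exp (-(3/2) * s + b s) * ζ := by
        gcongr
        linarith [hs.2]
    _ ≤ ξ s :=
        exp_mul_le_of_rpow_eq_add_integral (by linarith) hζ.le hs.1
          (fun u hu => hgpos u (hsub ⟨hu.1, hu.2.trans hs.2⟩)) (hξpos s (hsub hs)).le
          (heq s (hsub hs))

/-- Pathwise form of the second inequality of Lemma 3.1. -/
theorem stmt_1 (β ζ : ℝ) (hβ : 0 < β) (hζ : 0 < ζ)
    (b g ξ : ℝ → ℝ)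
    (hb : ContinuousOn b (Icc 0 1)) (hb0 : b 0 = 0)
    (hg : ContinuousOn g (Icc 0 1)) (hgpos : ∀ t ∈ Icc (0:ℝ) 1, 0 ≤ g t)
    (hξ : ContinuousOn ξ (Icc 0 1)) (hξpos : ∀ t ∈ Icc (0:ℝ) 1, 0 < ξ t)
    (heq : ∀ t ∈ Icc (0:ℝ) 1,
      ξ t ^ (1 + β) =
        Real.exp (-(3/2) * (1 + β) * t + (1 + β) * b t) * ζ ^ (1 + β)
        + (1 + β) * ∫ s in (0:ℝ)..t,
            Real.exp (-(3/2) * (1 + β) * (t - s) + (1 + β) * (b t - b s)) * g s) :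
    ∀ t ∈ Icc (0:ℝ) 1,
      Real.exp (-(3/2) * t - sSup ((fun s => |b s|) '' Icc (0:ℝ) t)) * ζ
        ≤ sInf (ξ '' Icc (0:ℝ) t) :=
  stmt_1_general β ζ hβ hζ b g ξ hb hgpos hξpos heq
end

section
/- Let β > 0. There exists a constant C > 0 depending only on β such that the following holds. Let ζ > 0, let b : [0,1] → ℝ be continuous with b(0) = 0, let g : [0,1] → ℝ be continuous and nonnegative, and let ξ : [0,1] → ℝ be continuous and positive such that for every t ∈ [0,1], ξ(t)^{1+β} = e^{-(3/2)(1+β)t + (1+β)b(t)} ζ^{1+β} + (1+β) ∫₀^t e^{-(3/2)(1+β)(t-s) + (1+β)(b(t)-b(s))} g(s) ds. Write b*_1 = sup_{0≤s≤1} |b(s)|. Then sup_{0≤t≤1} ξ(t) ≤ C ( e^{b*_1} ζ + e^{2 b*_1} ( sup_{0≤t≤1} g(t) )^{1/(1+β)} ). -/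
/-!
Raising the identity to the power `1/(1+β)` reduces the claim to bounding the two terms on the
right. With `B = sup |b|` the exponent of the first term is at most `(1+β) B`, and that of the
integrand at most `2 (1+β) B` because the drift `-(3/2)(1+β)(t-s)` is nonpositive, while the
integral runs over an interval of length at most `1`. Subadditivity of `x ↦ x ^ (1/(1+β))` then
gives the bound with `C = 1 + β`.
-/

open MeasureTheory Set Real

lemma Real.le_add_mul_of_rpow_le_add_mul_rpow {x a c p : ℝ} (hx : 0 ≤ x) (ha : 0 ≤ a)
    (hc : 0 ≤ c) (hp : 1 ≤ p) (h : x ^ p ≤ a ^ p + p * c ^ p) : x ≤ a + p * c := by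
  have hp0 : 0 < p := by linarith
  have hq : 1 / p ≤ 1 := (div_le_one hp0).2 hp
  have root : ∀ {y : ℝ}, 0 ≤ y → (y ^ p) ^ (1 / p) = y := fun hy => by
    rw [one_div, rpow_rpow_inv hy hp0.ne']
  calc x = (x ^ p) ^ (1 / p) := (root hx).symm
    _ ≤ (a ^ p + p * c ^ p) ^ (1 / p) := by gcongr
    _ ≤ (a ^ p) ^ (1 / p) + (p * c ^ p) ^ (1 / p) :=
        rpow_add_le_add_rpow (by positivity) (by positivity) (by positivity) hq
    _ = a + p ^ (1 / p) * c := by rw [mul_rpow hp0.le (by positivity), root ha, root hc]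
    _ ≤ a + p * c := by gcongr; exact rpow_le_self_of_one_le hp hq

lemma le_sSup_image_Icc {f : ℝ → ℝ} {a b x : ℝ} (hf : ContinuousOn f (Icc a b))
    (hx : x ∈ Icc a b) : f x ≤ sSup (f '' Icc a b) :=
  le_csSup (isCompact_Icc.bddAbove_image hf) (mem_image_of_mem f hx)

section VariationOfConstants

variable {μ p ζ B G t : ℝ} {b g : ℝ → ℝ}

lemma integral_exp_mul_le (hμ : μ ≤ 0) (hp : 0 ≤ p) (ht : t ∈ Icc (0:ℝ) 1)
    (hbB : ∀ s ∈ Icc (0:ℝ) 1, |b s| ≤ B) (hg : ∀ s ∈ Icc (0:ℝ) 1, 0 ≤ g s ∧ g s ≤ G) :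
    ∫ s in (0:ℝ)..t, exp (μ * (t - s) + p * (b t - b s)) * g s ≤ exp (p * (2 * B)) * G := by
  have hG : 0 ≤ G :=
    let h := hg 0 (left_mem_Icc.2 zero_le_one); h.1.trans h.2
  have integrand_le : ∀ s ∈ uIoc (0:ℝ) t,
      ‖exp (μ * (t - s) + p * (b t - b s)) * g s‖ ≤ exp (p * (2 * B)) * G := by
    intro s hs'
    rw [uIoc_of_le ht.1] at hs'
    obtain ⟨hs0, hst⟩ := hs'
    have hs : s ∈ Icc (0:ℝ) 1 := ⟨hs0.le, hst.trans ht.2⟩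
    obtain ⟨hgs0, hgsG⟩ := hg s hs
    have exponent_le : μ * (t - s) + p * (b t - b s) ≤ p * (2 * B) := by
      have hbt := abs_le.1 (hbB t ht)
      have hbs := abs_le.1 (hbB s hs)
      nlinarith [mul_nonneg (neg_nonneg.2 hμ) (sub_nonneg.2 hst)]
    rw [norm_mul, norm_of_nonneg (exp_pos _).le, norm_of_nonneg hgs0]
    exact mul_le_mul (exp_le_exp.2 exponent_le) hgsG hgs0 (exp_pos _).le
  calc _ ≤ ‖∫ s in (0:ℝ)..t, exp (μ * (t - s) + p * (b t - b s)) * g s‖ := le_norm_self _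
    _ ≤ exp (p * (2 * B)) * G * |t - 0| :=
        intervalIntegral.norm_integral_le_of_norm_le_const integrand_le
    _ ≤ exp (p * (2 * B)) * G * 1 := by
        gcongr; rw [sub_zero, abs_of_nonneg ht.1]; exact ht.2
    _ = exp (p * (2 * B)) * G := mul_one _

lemma rpow_le_of_eq_exp_mul_add_integral {x : ℝ} (hμ : μ ≤ 0) (hp : 0 < p) (hζ : 0 ≤ ζ)
    (ht : t ∈ Icc (0:ℝ) 1) (hbB : ∀ s ∈ Icc (0:ℝ) 1, |b s| ≤ B)
    (hg : ∀ s ∈ Icc (0:ℝ) 1, 0 ≤ g s ∧ g s ≤ G)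
    (hx : x ^ p = exp (μ * t + p * b t) * ζ ^ p
      + p * ∫ s in (0:ℝ)..t, exp (μ * (t - s) + p * (b t - b s)) * g s) :
    x ^ p ≤ (exp B * ζ) ^ p + p * (exp (2 * B) * G ^ (1 / p)) ^ p := by
  have hG : 0 ≤ G :=
    let h := hg 0 (left_mem_Icc.2 zero_le_one); h.1.trans h.2
  have exponent_le : μ * t + p * b t ≤ p * B := by
    nlinarith [mul_nonneg (neg_nonneg.2 hμ) ht.1, (abs_le.1 (hbB t ht)).2]
  have first_term : (exp B * ζ) ^ p = exp (p * B) * ζ ^ p := by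
    rw [mul_rpow (exp_pos _).le hζ, ← exp_mul, mul_comm B]
  have second_term : (exp (2 * B) * G ^ (1 / p)) ^ p = exp (p * (2 * B)) * G := by
    rw [mul_rpow (exp_pos _).le (rpow_nonneg hG _), ← exp_mul, mul_comm (2 * B), one_div,
      rpow_inv_rpow hG hp.ne']
  rw [hx, first_term, second_term]
  gcongr
  exact integral_exp_mul_le hμ hp.le ht hbB hg

end VariationOfConstants

/-- Pathwise form of the third inequality of Lemma 3.1. -/
theorem stmt_2 (β : ℝ) (hβ : 0 < β) :
    ∃ C > (0:ℝ), ∀ (ζ : ℝ), 0 < ζ → ∀ (b g ξ : ℝ → ℝ),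
      ContinuousOn b (Icc 0 1) → b 0 = 0 →
      ContinuousOn g (Icc 0 1) → (∀ t ∈ Icc (0:ℝ) 1, 0 ≤ g t) →
      ContinuousOn ξ (Icc 0 1) → (∀ t ∈ Icc (0:ℝ) 1, 0 < ξ t) →
      (∀ t ∈ Icc (0:ℝ) 1,
        ξ t ^ (1 + β) =
          Real.exp (-(3/2) * (1 + β) * t + (1 + β) * b t) * ζ ^ (1 + β)
          + (1 + β) * ∫ s in (0:ℝ)..t,
              Real.exp (-(3/2) * (1 + β) * (t - s) + (1 + β) * (b t - b s)) * g s) →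
      sSup (ξ '' Icc (0:ℝ) 1) ≤
        C * (Real.exp (sSup ((fun s => |b s|) '' Icc (0:ℝ) 1)) * ζ
          + Real.exp (2 * sSup ((fun s => |b s|) '' Icc (0:ℝ) 1))
              * (sSup (g '' Icc (0:ℝ) 1)) ^ (1 / (1 + β))) := by
  have hp : 1 ≤ 1 + β := by linarith
  refine ⟨1 + β, by linarith, fun ζ hζ b g ξ hb _ hg hg0 _ hξ0 hξ => ?_⟩
  set B := sSup ((fun s => |b s|) '' Icc (0:ℝ) 1)
  set G := sSup (g '' Icc (0:ℝ) 1)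
  have hgG : ∀ s ∈ Icc (0:ℝ) 1, 0 ≤ g s ∧ g s ≤ G := fun s hs =>
    ⟨hg0 s hs, le_sSup_image_Icc hg hs⟩
  have hbB : ∀ s ∈ Icc (0:ℝ) 1, |b s| ≤ B := fun s hs =>
    le_sSup_image_Icc (f := fun s => |b s|) hb.abs hs
  have hG : 0 ≤ G :=
    let h := hgG 0 (left_mem_Icc.2 zero_le_one); h.1.trans h.2
  refine csSup_le ((nonempty_Icc.2 zero_le_one).image ξ) ?_
  rintro _ ⟨t, ht, rfl⟩
  have hμ : -(3/2) * (1 + β) ≤ 0 := by linarith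
  have pointwise := Real.le_add_mul_of_rpow_le_add_mul_rpow (hξ0 t ht).le
    (by positivity) (by positivity) hp (rpow_le_of_eq_exp_mul_add_integral hμ (by linarith)
      hζ.le ht hbB hgG (hξ t ht))
  have hterm : 0 ≤ exp B * ζ := by positivity
  nlinarith
end

section
/- Let β > 0, δ > 0 and ζ > 0. Let b : [0,1] → ℝ be continuous with b(0) = 0 and write b*_1 = sup_{0≤s≤1} |b(s)|. Let g : [0,1] → ℝ be continuous and nonnegative, let ξ : [0,1] → ℝ be continuous and positive with ξ(s) ≥ e^{-(3/2)s + b(s)} ζ for all s ∈ [0,1], and let m : [0,1] → ℝ be continuous with m(0) = 0, such that for every t ∈ [0,1], ξ(t)^{-δ} - ζ^{-δ} = (δ(3+δ)/2) ∫₀^t ξ(s)^{-δ} ds - δ ∫₀^t g(s) / ξ(s)^{1+δ+β} ds - δ m(t). Then ∫₀^1 g(s) / ξ(s)^{1+β+δ} ds ≤ δ^{-1} ζ^{-δ} + ((3+δ)/2) e^{(3/2)δ + δ b*_1} ζ^{-δ} + sup_{0≤t≤1} |m(t)|. -/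
/-! Evaluate the identity at `t = 1` and solve it for the integral of `g / ξ ^ (1 + δ + β)`.
The term `ξ 1 ^ (-δ)` is positive and `-m 1 ≤ sup |m|`, while the lower bound on `ξ` gives
`ξ s ^ (-δ) ≤ exp ((3/2) δ + δ b*₁) ζ ^ (-δ)` on `[0, 1]`, which bounds the drift integral. -/

open MeasureTheory Set Real

theorem IsCompact.abs_le_sSup_image_abs {s : Set ℝ} (hs : IsCompact s) {f : ℝ → ℝ}
    (hf : ContinuousOn f s) {x : ℝ} (hx : x ∈ s) : |f x| ≤ sSup ((fun y => |f y|) '' s) :=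
  le_csSup (hs.image_of_continuousOn hf.abs).bddAbove (mem_image_of_mem _ hx)

theorem rpow_neg_le_exp_mul_rpow_neg {u x ζ δ : ℝ} (hζ : 0 < ζ) (hδ : 0 ≤ δ)
    (hx : exp u * ζ ≤ x) : x ^ (-δ) ≤ exp (-δ * u) * ζ ^ (-δ) :=
  calc x ^ (-δ) ≤ (exp u * ζ) ^ (-δ) :=
        rpow_le_rpow_of_nonpos (by positivity) hx (neg_nonpos.mpr hδ)
    _ = exp (-δ * u) * ζ ^ (-δ) := by
        rw [mul_rpow (exp_pos u).le hζ.le, ← exp_mul, mul_comm u]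

theorem rpow_neg_le_of_exp_neg_three_halves_mul_le {s c M x ζ δ : ℝ} (hζ : 0 < ζ) (hδ : 0 ≤ δ)
    (hs : s ≤ 1) (hcM : |c| ≤ M) (hx : exp (-(3/2) * s + c) * ζ ≤ x) :
    x ^ (-δ) ≤ exp ((3/2) * δ + δ * M) * ζ ^ (-δ) := by
  refine (rpow_neg_le_exp_mul_rpow_neg hζ hδ hx).trans
    (mul_le_mul_of_nonneg_right (exp_le_exp.mpr ?_) (rpow_pos_of_pos hζ _).le)
  have hc : -c ≤ M := (neg_le_abs c).trans hcM
  nlinarith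

theorem stmt_3_general (β δ ζ : ℝ) (hδ : 0 < δ) (hζ : 0 < ζ)
    (b g ξ m : ℝ → ℝ)
    (hb : ContinuousOn b (Icc 0 1))
    (hξ : ContinuousOn ξ (Icc 0 1)) (hξpos : ∀ t ∈ Icc (0:ℝ) 1, 0 < ξ t)
    (hξlow : ∀ s ∈ Icc (0:ℝ) 1, Real.exp (-(3/2) * s + b s) * ζ ≤ ξ s)
    (hm : ContinuousOn m (Icc 0 1))
    (heq : ∀ t ∈ Icc (0:ℝ) 1,
      ξ t ^ (-δ) - ζ ^ (-δ) =
        (δ * (3 + δ) / 2) * (∫ s in (0:ℝ)..t, ξ s ^ (-δ))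
        - δ * (∫ s in (0:ℝ)..t, g s / ξ s ^ (1 + δ + β))
        - δ * m t) :
    (∫ s in (0:ℝ)..1, g s / ξ s ^ (1 + β + δ)) ≤
      δ⁻¹ * ζ ^ (-δ)
      + ((3 + δ) / 2) * Real.exp ((3/2) * δ + δ * sSup ((fun s => |b s|) '' Icc (0:ℝ) 1))
          * ζ ^ (-δ)
      + sSup ((fun t => |m t|) '' Icc (0:ℝ) 1) := by
  set E := exp ((3/2) * δ + δ * sSup ((fun s => |b s|) '' Icc (0:ℝ) 1))
  set Mm := sSup ((fun t => |m t|) '' Icc (0:ℝ) 1)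
  have h01 : (1:ℝ) ∈ Icc (0:ℝ) 1 := right_mem_Icc.mpr zero_le_one
  have hξE : ∀ s ∈ Icc (0:ℝ) 1, ξ s ^ (-δ) ≤ E * ζ ^ (-δ) := fun s hs =>
    rpow_neg_le_of_exp_neg_three_halves_mul_le hζ hδ.le hs.2
      (isCompact_Icc.abs_le_sSup_image_abs hb hs) (hξlow s hs)
  have hdrift : ∫ s in (0:ℝ)..1, ξ s ^ (-δ) ≤ E * ζ ^ (-δ) := by
    have hint : IntervalIntegrable (fun s => ξ s ^ (-δ)) volume 0 1 :=
      (hξ.rpow_const fun s hs => Or.inl (hξpos s hs).ne').intervalIntegrable_of_Icc zero_le_one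
    simpa using intervalIntegral.integral_mono_on zero_le_one hint intervalIntegrable_const hξE
  have hξ1 : 0 < ξ 1 ^ (-δ) := rpow_pos_of_pos (hξpos 1 h01) _
  have hm1 : -m 1 ≤ Mm := (neg_le_abs _).trans (isCompact_Icc.abs_le_sSup_image_abs hm h01)
  have hK : δ * (3 + δ) / 2 * ∫ s in (0:ℝ)..1, ξ s ^ (-δ) ≤ δ * (3 + δ) / 2 * (E * ζ ^ (-δ)) :=
    mul_le_mul_of_nonneg_left hdrift (by positivity)
  have hδm1 : δ * -m 1 ≤ δ * Mm := mul_le_mul_of_nonneg_left hm1 hδ.le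
  rw [add_right_comm 1 β δ, ← mul_le_mul_iff_right₀ hδ]
  calc δ * ∫ s in (0:ℝ)..1, g s / ξ s ^ (1 + δ + β)
      ≤ ζ ^ (-δ) + δ * (3 + δ) / 2 * (E * ζ ^ (-δ)) + δ * Mm := by linarith [heq 1 h01]
    _ = δ * (δ⁻¹ * ζ ^ (-δ) + (3 + δ) / 2 * E * ζ ^ (-δ) + Mm) := by field_simp

/-- Pathwise form of Lemma 3.3. -/
theorem stmt_3 (β δ ζ : ℝ) (hβ : 0 < β) (hδ : 0 < δ) (hζ : 0 < ζ)
    (b g ξ m : ℝ → ℝ)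
    (hb : ContinuousOn b (Icc 0 1)) (hb0 : b 0 = 0)
    (hg : ContinuousOn g (Icc 0 1)) (hgpos : ∀ t ∈ Icc (0:ℝ) 1, 0 ≤ g t)
    (hξ : ContinuousOn ξ (Icc 0 1)) (hξpos : ∀ t ∈ Icc (0:ℝ) 1, 0 < ξ t)
    (hξlow : ∀ s ∈ Icc (0:ℝ) 1, Real.exp (-(3/2) * s + b s) * ζ ≤ ξ s)
    (hm : ContinuousOn m (Icc 0 1)) (hm0 : m 0 = 0)
    (heq : ∀ t ∈ Icc (0:ℝ) 1,
      ξ t ^ (-δ) - ζ ^ (-δ) =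
        (δ * (3 + δ) / 2) * (∫ s in (0:ℝ)..t, ξ s ^ (-δ))
        - δ * (∫ s in (0:ℝ)..t, g s / ξ s ^ (1 + δ + β))
        - δ * m t) :
    (∫ s in (0:ℝ)..1, g s / ξ s ^ (1 + β + δ)) ≤
      δ⁻¹ * ζ ^ (-δ)
      + ((3 + δ) / 2) * Real.exp ((3/2) * δ + δ * sSup ((fun s => |b s|) '' Icc (0:ℝ) 1))
          * ζ ^ (-δ)
      + sSup ((fun t => |m t|) '' Icc (0:ℝ) 1) :=
  stmt_3_general β δ ζ hδ hζ b g ξ m hb hξ hξpos hξlow hm heq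
end

section
/- Let β > 0 and ζ > 0. Let f ∈ L²([0,1];ℝ) and set h(t) = ∫₀^t f(s) ds. Let g : [0,1] → ℝ be continuous and nonnegative, and let ξ : [0,1] → ℝ be continuous and positive with ξ(0) = ζ satisfying, for every t ∈ [0,1], ξ(t) = ζ + ∫₀^t ( -ξ(s) + g(s) ξ(s)^{-β} + ξ(s) f(s) ) ds. Then ξ(t) ≥ e^{-t - ‖f‖_{L²([0,1])}} ζ for all t ∈ [0,1]. -/
/-!
Multiplying by the integrating factor `E(t) = exp (∫₀ᵗ (1 - f))` removes the linear terms: the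
product `ξ E` is absolutely continuous with a.e. derivative `g ξ^(-β) E ≥ 0`, so `ξ(t) E(t) ≥ ζ`.
It remains to bound `|∫₀ᵗ f|` by `‖f‖_{L²([0,1])}`, which is Cauchy–Schwarz on an interval of
length at most one.
-/

open MeasureTheory Set Real Filter

theorem LipschitzOnWith.comp_absolutelyContinuousOnInterval {X Y : Type*} [PseudoMetricSpace X]
    [PseudoMetricSpace Y] {φ : X → Y} {K : NNReal} {s : Set X} {f : ℝ → X} {a b : ℝ}
    (hφ : LipschitzOnWith K φ s) (hf : AbsolutelyContinuousOnInterval f a b)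
    (hfs : MapsTo f (uIcc a b) s) :
    AbsolutelyContinuousOnInterval (φ ∘ f) a b := by
  unfold AbsolutelyContinuousOnInterval at hf ⊢
  have hK := hf.const_mul (K : ℝ)
  rw [mul_zero] at hK
  refine squeeze_zero' (Eventually.of_forall fun E => Finset.sum_nonneg fun _ _ => dist_nonneg)
    (eventually_inf_principal.mpr (Eventually.of_forall fun E hE => ?_)) hK
  rw [Finset.mul_sum]
  exact Finset.sum_le_sum fun i hi =>
    hφ.dist_le_mul _ (hfs (hE.1 i hi).1) _ (hfs (hE.1 i hi).2)

theorem ContDiff.comp_absolutelyContinuousOnInterval {φ f : ℝ → ℝ} {a b : ℝ}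
    (hφ : ContDiff ℝ 1 φ) (hf : AbsolutelyContinuousOnInterval f a b) :
    AbsolutelyContinuousOnInterval (φ ∘ f) a b := by
  obtain ⟨C, hC⟩ := hf.exists_bound
  obtain ⟨K, hK⟩ := hφ.contDiffOn.exists_lipschitzOnWith (s := Metric.closedBall 0 C) one_ne_zero
    (convex_closedBall 0 C) (isCompact_closedBall 0 C)
  exact hK.comp_absolutelyContinuousOnInterval hf fun x hx =>
    mem_closedBall_zero_iff.mpr (hC x hx)

theorem le_mul_exp_integral_of_nonneg {u F k : ℝ → ℝ} {a b : ℝ} (hab : a ≤ b)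
    (hF : IntervalIntegrable F volume a b) (hk : IntervalIntegrable k volume a b)
    (hu : ∀ t ∈ Icc a b, u t = u a + ∫ s in a..t, F s)
    (hFk : ∀ s ∈ Icc a b, 0 ≤ F s + k s * u s) :
    u a ≤ u b * exp (∫ s in a..b, k s) := by
  set v : ℝ → ℝ := fun t => u a + ∫ s in a..t, F s
  set E : ℝ → ℝ := fun t => exp (∫ s in a..t, k s)
  have hv_ac : AbsolutelyContinuousOnInterval v a b :=
    (contDiff_const.add contDiff_id).comp_absolutelyContinuousOnInterval
      (hF.absolutelyContinuousOnInterval_intervalIntegral left_mem_uIcc)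
  have hE_ac : AbsolutelyContinuousOnInterval E a b :=
    contDiff_exp.comp_absolutelyContinuousOnInterval
      (hk.absolutelyContinuousOnInterval_intervalIntegral left_mem_uIcc)
  rw [← uIcc_of_le hab] at hu hFk
  have hvu : ∀ t ∈ uIcc a b, v t = u t := fun t ht => (hu t ht).symm
  have hderiv : ∀ᵐ x, x ∈ uIoc a b →
      deriv v x * E x + v x * deriv E x = (F x + k x * u x) * E x := by
    filter_upwards [hF.ae_hasDerivAt_integral, hk.ae_hasDerivAt_integral] with x hFx hkx hx
    replace hx := uIoc_subset_uIcc hx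
    rw [((hFx hx a left_mem_uIcc).const_add (u a)).deriv, (hkx hx a left_mem_uIcc).exp.deriv,
      hvu x hx]
    ring
  have hnonneg : 0 ≤ ∫ x in a..b, (F x + k x * u x) * E x :=
    intervalIntegral.integral_nonneg hab fun x hx =>
      mul_nonneg (hFk x (uIcc_of_le hab ▸ hx)) (exp_pos _).le
  rw [← intervalIntegral.integral_congr_ae hderiv, hv_ac.integral_deriv_mul_eq_sub hE_ac,
    hvu a left_mem_uIcc, hvu b right_mem_uIcc] at hnonneg
  simpa [E] using hnonneg

theorem sq_integral_abs_le_mul_integral_sq {f : ℝ → ℝ} {a b : ℝ} (hab : a ≤ b)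
    (hf : IntervalIntegrable f volume a b)
    (hf2 : IntervalIntegrable (fun s => f s ^ 2) volume a b) :
    (∫ s in a..b, |f s|) ^ 2 ≤ (b - a) * ∫ s in a..b, f s ^ 2 := by
  set A := ∫ s in a..b, |f s|
  set I := ∫ s in a..b, f s ^ 2
  have hexpand : ∫ s in a..b, ((b - a) * |f s| - A) ^ 2
      = (b - a) ^ 2 * I - 2 * (b - a) * A * A + A ^ 2 * (b - a) := by
    have hpoint : ∀ s, ((b - a) * |f s| - A) ^ 2
        = (b - a) ^ 2 * f s ^ 2 - 2 * (b - a) * A * |f s| + A ^ 2 := by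
      intro s; rw [← sq_abs (f s)]; ring
    simp_rw [hpoint]
    rw [intervalIntegral.integral_add ((hf2.const_mul _).sub (hf.abs.const_mul _))
        intervalIntegrable_const,
      intervalIntegral.integral_sub (hf2.const_mul _) (hf.abs.const_mul _),
      intervalIntegral.integral_const_mul, intervalIntegral.integral_const_mul,
      intervalIntegral.integral_const, smul_eq_mul]
    ring
  have hnonneg : 0 ≤ (b - a) * ((b - a) * I - A ^ 2) := by
    have : 0 ≤ ∫ s in a..b, ((b - a) * |f s| - A) ^ 2 :=
      intervalIntegral.integral_nonneg hab fun s _ => sq_nonneg _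
    linarith
  rcases hab.eq_or_lt with rfl | hlt
  · simp [A]
  · linarith [(mul_nonneg_iff_of_pos_left (sub_pos.2 hlt)).1 hnonneg]

theorem abs_integral_le_sqrt_integral_sq {f : ℝ → ℝ} {t : ℝ} (ht : t ∈ Icc (0:ℝ) 1)
    (hf : IntervalIntegrable f volume 0 1)
    (hf2 : IntervalIntegrable (fun s => f s ^ 2) volume 0 1) :
    |∫ s in (0:ℝ)..t, f s| ≤ √(∫ s in (0:ℝ)..1, f s ^ 2) := by
  have hsub : uIcc 0 t ⊆ uIcc (0:ℝ) 1 := uIcc_subset_uIcc_left (Icc_subset_uIcc ht)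
  have hsq : (∫ s in (0:ℝ)..t, |f s|) ^ 2 ≤ ∫ s in (0:ℝ)..1, f s ^ 2 :=
    calc (∫ s in (0:ℝ)..t, |f s|) ^ 2 ≤ (t - 0) * ∫ s in (0:ℝ)..t, f s ^ 2 :=
          sq_integral_abs_le_mul_integral_sq ht.1 (hf.mono_set hsub) (hf2.mono_set hsub)
      _ ≤ 1 * ∫ s in (0:ℝ)..1, f s ^ 2 := by
          gcongr
          · exact intervalIntegral.integral_nonneg ht.1 fun s _ => sq_nonneg _
          · linarith [ht.2]
          · exact intervalIntegral.integral_mono_interval le_rfl ht.1 ht.2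
              (Eventually.of_forall fun s => sq_nonneg _) hf2
      _ = _ := one_mul _
  calc |∫ s in (0:ℝ)..t, f s| ≤ ∫ s in (0:ℝ)..t, |f s| :=
        intervalIntegral.abs_integral_le_integral_abs ht.1
    _ ≤ √(∫ s in (0:ℝ)..1, f s ^ 2) := Real.le_sqrt_of_sq_le hsq

theorem stmt_5_general (β ζ : ℝ) (hζ : 0 < ζ)
    (f : ℝ → ℝ)
    (hf : IntervalIntegrable f volume 0 1)
    (hf2 : IntervalIntegrable (fun s => f s ^ 2) volume 0 1)
    (g ξ : ℝ → ℝ)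
    (hg : ContinuousOn g (Icc 0 1)) (hgpos : ∀ t ∈ Icc (0:ℝ) 1, 0 ≤ g t)
    (hξ : ContinuousOn ξ (Icc 0 1)) (hξpos : ∀ t ∈ Icc (0:ℝ) 1, 0 < ξ t)
    (hξ0 : ξ 0 = ζ)
    (heq : ∀ t ∈ Icc (0:ℝ) 1,
      ξ t = ζ + ∫ s in (0:ℝ)..t, (-ξ s + g s * ξ s ^ (-β) + ξ s * f s)) :
    ∀ t ∈ Icc (0:ℝ) 1,
      Real.exp (-t - Real.sqrt (∫ s in (0:ℝ)..1, f s ^ 2)) * ζ ≤ ξ t := by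
  intro t ht
  have hsub : uIcc 0 t ⊆ uIcc (0:ℝ) 1 := uIcc_subset_uIcc_left (Icc_subset_uIcc ht)
  have hdrift : IntervalIntegrable (fun s => -ξ s + g s * ξ s ^ (-β) + ξ s * f s) volume 0 1 := by
    rw [← uIcc_of_le zero_le_one] at hg hξ hξpos
    have hrpow : ContinuousOn (fun s => ξ s ^ (-β)) (uIcc 0 1) :=
      hξ.rpow_const fun x hx => Or.inl (hξpos x hx).ne'
    exact (hξ.neg.add (hg.mul hrpow)).intervalIntegrable.add (hf.continuousOn_mul hξ)
  have hlow : ξ 0 ≤ ξ t * exp (∫ s in (0:ℝ)..t, (1 - f s)) := by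
    refine le_mul_exp_integral_of_nonneg ht.1 (hdrift.mono_set hsub)
      ((intervalIntegrable_const.sub hf).mono_set hsub) (fun r hr => ?_) (fun r hr => ?_)
    · rw [hξ0]; exact heq r ⟨hr.1, hr.2.trans ht.2⟩
    · have hr1 : r ∈ Icc (0:ℝ) 1 := ⟨hr.1, hr.2.trans ht.2⟩
      have : 0 ≤ g r * ξ r ^ (-β) :=
        mul_nonneg (hgpos r hr1) (rpow_pos_of_pos (hξpos r hr1) _).le
      linarith
  rw [hξ0, intervalIntegral.integral_sub intervalIntegrable_const (hf.mono_set hsub),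
    intervalIntegral.integral_const, smul_eq_mul, mul_one, sub_zero] at hlow
  have hCS := abs_integral_le_sqrt_integral_sq ht hf hf2
  calc exp (-t - √(∫ s in (0:ℝ)..1, f s ^ 2)) * ζ
      ≤ exp (-(t - ∫ s in (0:ℝ)..t, f s)) * ζ := by
        gcongr; linarith [neg_abs_le (∫ s in (0:ℝ)..t, f s)]
    _ ≤ exp (-(t - ∫ s in (0:ℝ)..t, f s)) * (ξ t * exp (t - ∫ s in (0:ℝ)..t, f s)) := by
        gcongr
    _ = ξ t := by rw [mul_left_comm, ← exp_add, neg_add_cancel, exp_zero, mul_one]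

/-- Lower bound (4.2) of Lemma 4.2 for the controlled (skeleton) inhibitor equation. -/
theorem stmt_5 (β ζ : ℝ) (hβ : 0 < β) (hζ : 0 < ζ)
    (f : ℝ → ℝ)
    (hf : IntervalIntegrable f volume 0 1)
    (hf2 : IntervalIntegrable (fun s => f s ^ 2) volume 0 1)
    (h : ℝ → ℝ) (hdef : ∀ t, h t = ∫ s in (0:ℝ)..t, f s)
    (g ξ : ℝ → ℝ)
    (hg : ContinuousOn g (Icc 0 1)) (hgpos : ∀ t ∈ Icc (0:ℝ) 1, 0 ≤ g t)
    (hξ : ContinuousOn ξ (Icc 0 1)) (hξpos : ∀ t ∈ Icc (0:ℝ) 1, 0 < ξ t)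
    (hξ0 : ξ 0 = ζ)
    (heq : ∀ t ∈ Icc (0:ℝ) 1,
      ξ t = ζ + ∫ s in (0:ℝ)..t, (-ξ s + g s * ξ s ^ (-β) + ξ s * f s)) :
    ∀ t ∈ Icc (0:ℝ) 1,
      Real.exp (-t - Real.sqrt (∫ s in (0:ℝ)..1, f s ^ 2)) * ζ ≤ ξ t :=
  stmt_5_general β ζ hζ f hf hf2 g ξ hg hgpos hξ hξpos hξ0 heq
end

section
/- Let β > 0. There exists a constant C > 0 depending only on β such that the following holds. Let ζ > 0, let f ∈ L²([0,1];ℝ), set h(t) = ∫₀^t f(s) ds, let g : [0,1] → ℝ be continuous and nonnegative, and let ξ : [0,1] → ℝ be continuous and positive with ξ(0) = ζ satisfying, for every t ∈ [0,1], ξ(t) = ζ + ∫₀^t ( -ξ(s) + g(s) ξ(s)^{-β} + ξ(s) f(s) ) ds. Then for every t ∈ [0,1], ξ(t) ≤ C ( e^{‖f‖_{L²([0,1])}} ζ + e^{2‖f‖_{L²([0,1])}} ( sup_{0≤s≤1} g(s) )^{1/(1+β)} ). -/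
open MeasureTheory Set Real Filter Topology

/-!
Above the level `K = (sup g) ^ (1 / (1 + β))` the reaction term `g ξ ^ (-β)` is at most `K ≤ ξ`,
so it is absorbed by the decay `-ξ` and `ξ` grows at rate at most `|f| ξ`. From the last time
before `t` at which `ξ ≤ max ζ K`, Grönwall's inequality gives
`ξ t ≤ max ζ K * exp ∫ |f| ≤ (ζ + K) * exp ‖f‖₂` (Cauchy–Schwarz on `[0, 1]`), so `C = 1` works.

Grönwall's inequality for a merely integrable rate `k` is proved by real induction: across an
interval on which `∫ k = δ ≤ ε`, the bound `c + ∫ k u` grows at most by the factor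
`1 / (1 - δ) ≤ exp (δ / (1 - ε))`; then `ε → 0`.
-/

lemma MeasureTheory.IntegrableOn.intervalIntegrable_of_mem_Icc {E : Type*} [NormedAddCommGroup E]
    {μ : Measure ℝ} {φ : ℝ → E} {a b z w : ℝ} (hφ : IntegrableOn φ (Icc a b) μ)
    (hz : z ∈ Icc a b) (hw : w ∈ Icc a b) : IntervalIntegrable φ μ z w :=
  (hφ.mono_set (uIcc_subset_Icc hz hw)).intervalIntegrable

lemma one_le_one_sub_mul_exp_div {δ ε : ℝ} (hδ : 0 ≤ δ) (hδε : δ ≤ ε) (hε : ε < 1) :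
    1 ≤ (1 - δ) * exp (δ / (1 - ε)) := by
  have hδ1 : 0 < 1 - δ := by linarith
  calc 1 = (1 - δ) * (δ / (1 - δ) + 1) := by field_simp; ring
    _ ≤ (1 - δ) * exp (δ / (1 - δ)) := by gcongr; exact add_one_le_exp _
    _ ≤ (1 - δ) * exp (δ / (1 - ε)) := by gcongr

section Gronwall

variable {u k : ℝ → ℝ} {a b c : ℝ}

lemma add_integral_mul_nonneg (hu0 : ∀ t ∈ Icc a b, 0 ≤ u t) (hk0 : ∀ t ∈ Icc a b, 0 ≤ k t)
    (hyp : ∀ t ∈ Icc a b, u t ≤ c + ∫ s in a..t, k s * u s) {z : ℝ} (hz : z ∈ Icc a b) :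
    0 ≤ c + ∫ s in a..z, k s * u s := by
  have ha : a ∈ Icc a b := left_mem_Icc.2 (hz.1.trans hz.2)
  have hc : 0 ≤ c := by simpa using (hu0 a ha).trans (hyp a ha)
  exact add_nonneg hc <| intervalIntegral.integral_nonneg hz.1
    fun s hs => mul_nonneg (hk0 s ⟨hs.1, hs.2.trans hz.2⟩) (hu0 s ⟨hs.1, hs.2.trans hz.2⟩)

lemma gronwall_step (hu : ContinuousOn u (Icc a b)) (hu0 : ∀ t ∈ Icc a b, 0 ≤ u t)
    (hk0 : ∀ t ∈ Icc a b, 0 ≤ k t) (hk : IntegrableOn k (Icc a b))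
    (hyp : ∀ t ∈ Icc a b, u t ≤ c + ∫ s in a..t, k s * u s)
    {x y : ℝ} (hx : x ∈ Icc a b) (hy : y ∈ Icc a b) (hxy : x ≤ y) :
    (1 - ∫ s in x..y, k s) * (c + ∫ s in a..y, k s * u s) ≤ c + ∫ s in a..x, k s * u s := by
  have hku : IntegrableOn (fun s => k s * u s) (Icc a b) := hk.mul_continuousOn hu isCompact_Icc
  have ha : a ∈ Icc a b := left_mem_Icc.2 (hx.1.trans hx.2)
  have hsplit : ∀ z ∈ Icc a b,
      ∫ s in a..z, k s * u s = (∫ s in a..x, k s * u s) + ∫ s in x..z, k s * u s :=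
    fun z hz => (intervalIntegral.integral_add_adjacent_intervals
      (hku.intervalIntegrable_of_mem_Icc ha hx) (hku.intervalIntegrable_of_mem_Icc hx hz)).symm
  have hsub : Icc x y ⊆ Icc a b := Icc_subset_Icc hx.1 hy.2
  -- the maximum of `u` on `[x, y]` controls the increment of the integral over `[x, y]`
  obtain ⟨m, hm, hmax⟩ := isCompact_Icc.exists_isMaxOn (nonempty_Icc.2 hxy) (hu.mono hsub)
  have hincr : ∀ z ∈ Icc x y, ∫ s in x..z, k s * u s ≤ (∫ s in x..y, k s) * u m := by
    intro z hz
    have hzab := hsub hz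
    calc ∫ s in x..z, k s * u s ≤ ∫ s in x..z, k s * u m :=
          intervalIntegral.integral_mono_on hz.1 (hku.intervalIntegrable_of_mem_Icc hx hzab)
            ((hk.intervalIntegrable_of_mem_Icc hx hzab).mul_const _) fun s hs =>
              mul_le_mul_of_nonneg_left (hmax ⟨hs.1, hs.2.trans hz.2⟩)
                (hk0 s (hsub ⟨hs.1, hs.2.trans hz.2⟩))
      _ = (∫ s in x..z, k s) * u m := intervalIntegral.integral_mul_const _ _
      _ ≤ (∫ s in x..y, k s) * u m := by
          gcongr
          · exact hu0 m (hsub hm)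
          · exact intervalIntegral.integral_mono_interval le_rfl hz.1 hz.2
              ((ae_restrict_mem measurableSet_Ioc).mono fun s hs =>
                hk0 s (hsub (Ioc_subset_Icc_self hs))) (hk.intervalIntegrable_of_mem_Icc hx hy)
  have hum : u m * (1 - ∫ s in x..y, k s) ≤ c + ∫ s in a..x, k s * u s := by
    have := hyp m (hsub hm)
    linarith [hsplit m (hsub hm), hincr m hm]
  have hy' : c + ∫ s in a..y, k s * u s ≤
      (c + ∫ s in a..x, k s * u s) + (∫ s in x..y, k s) * u m := by
    linarith [hsplit y hy, hincr y (right_mem_Icc.2 hxy)]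
  rcases le_or_gt (∫ s in x..y, k s) 1 with hI | hI
  · have hI0 : 0 ≤ ∫ s in x..y, k s := intervalIntegral.integral_nonneg hxy
      fun s hs => hk0 s (hsub hs)
    nlinarith [mul_le_mul_of_nonneg_left hy' (sub_nonneg.2 hI), mul_le_mul_of_nonneg_left hum hI0]
  · nlinarith [add_integral_mul_nonneg hu0 hk0 hyp hx, add_integral_mul_nonneg hu0 hk0 hyp hy]

lemma add_integral_le_mul_exp_div (hu : ContinuousOn u (Icc a b)) (hu0 : ∀ t ∈ Icc a b, 0 ≤ u t)
    (hk0 : ∀ t ∈ Icc a b, 0 ≤ k t) (hk : IntegrableOn k (Icc a b))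
    (hyp : ∀ t ∈ Icc a b, u t ≤ c + ∫ s in a..t, k s * u s) {ε : ℝ} (hε0 : 0 < ε) (hε1 : ε < 1) :
    ∀ t ∈ Icc a b,
      c + ∫ s in a..t, k s * u s ≤ c * exp ((∫ s in a..t, k s) / (1 - ε)) := by
  intro t ht
  have hab : a ≤ b := ht.1.trans ht.2
  set R : ℝ → ℝ := fun y => c + ∫ s in a..y, k s * u s
  set P : ℝ → ℝ := fun y => ∫ s in a..y, k s
  have hku : IntegrableOn (fun s => k s * u s) (Icc a b) := hk.mul_continuousOn hu isCompact_Icc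
  have hR : ContinuousOn R (Icc a b) := by
    rw [← uIcc_of_le hab] at hku ⊢
    exact continuousOn_const.add (intervalIntegral.continuousOn_primitive_interval hku)
  have hP : ContinuousOn P (Icc a b) := by
    rw [← uIcc_of_le hab] at hk ⊢
    exact intervalIntegral.continuousOn_primitive_interval hk
  suffices Icc a b ⊆ {y | R y ≤ c * exp (P y / (1 - ε))} from this ht
  refine IsClosed.Icc_subset_of_forall_mem_nhdsWithin ?_ (by simp [R, P]) ?_
  · rw [inter_comm]
    exact (hR.prodMk ((hP.div_const _).rexp.const_smul c)).preimage_isClosed_of_isClosed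
      isClosed_Icc (isClosed_le continuous_fst continuous_snd)
  intro x ⟨hxS, hx⟩
  have hxab : x ∈ Icc a b := Ico_subset_Icc_self hx
  have hPx : ∀ᶠ z in 𝓝[>] x, P z < P x + ε := by
    rw [← nhdsWithin_Ioo_eq_nhdsGT hx.2]
    exact ((hP x hxab).mono (Ioo_subset_Icc_self.trans (Icc_subset_Icc hx.1 le_rfl)))
      (Iio_mem_nhds (lt_add_of_pos_right _ hε0))
  filter_upwards [hPx, Ioo_mem_nhdsGT hx.2] with z hzP hz
  have hzab : z ∈ Icc a b := ⟨hx.1.trans hz.1.le, hz.2.le⟩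
  have hδ : ∫ s in x..z, k s = P z - P x :=
    (intervalIntegral.integral_interval_sub_left
      (hk.intervalIntegrable_of_mem_Icc (left_mem_Icc.2 hab) hzab)
      (hk.intervalIntegrable_of_mem_Icc (left_mem_Icc.2 hab) hxab)).symm
  have hδ0 : 0 ≤ P z - P x := hδ ▸ intervalIntegral.integral_nonneg hz.1.le
    fun s hs => hk0 s ⟨hx.1.trans hs.1, hs.2.trans hz.2.le⟩
  have hstep := gronwall_step hu hu0 hk0 hk hyp hxab hzab hz.1.le
  rw [hδ] at hstep
  have hexp := one_le_one_sub_mul_exp_div hδ0 (by linarith) hε1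
  calc R z ≤ (1 - (P z - P x)) * exp ((P z - P x) / (1 - ε)) * R z :=
          le_mul_of_one_le_left (add_integral_mul_nonneg hu0 hk0 hyp hzab) hexp
    _ = exp ((P z - P x) / (1 - ε)) * ((1 - (P z - P x)) * R z) := by ring
    _ ≤ exp ((P z - P x) / (1 - ε)) * (c * exp (P x / (1 - ε))) :=
          mul_le_mul_of_nonneg_left (hstep.trans hxS) (exp_pos _).le
    _ = c * exp (P z / (1 - ε)) := by rw [mul_left_comm, ← exp_add]; ring_nf

theorem le_mul_exp_integral_of_le_add_integral (hu : ContinuousOn u (Icc a b))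
    (hu0 : ∀ t ∈ Icc a b, 0 ≤ u t) (hk0 : ∀ t ∈ Icc a b, 0 ≤ k t) (hk : IntegrableOn k (Icc a b))
    (hyp : ∀ t ∈ Icc a b, u t ≤ c + ∫ s in a..t, k s * u s) :
    ∀ t ∈ Icc a b, u t ≤ c * exp (∫ s in a..t, k s) := by
  intro t ht
  have hcont : ContinuousAt (fun ε : ℝ => c * exp ((∫ s in a..t, k s) / (1 - ε))) 0 :=
    continuousAt_const.mul
      (continuousAt_const.div (continuousAt_const.sub continuousAt_id) (by norm_num)).rexp
  have hlim : Tendsto (fun ε : ℝ => c * exp ((∫ s in a..t, k s) / (1 - ε))) (𝓝[>] 0)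
      (𝓝 (c * exp (∫ s in a..t, k s))) := by
    simpa using hcont.tendsto.mono_left nhdsWithin_le_nhds
  refine ge_of_tendsto hlim ?_
  filter_upwards [Ioo_mem_nhdsGT one_pos] with ε hε
  exact (hyp t ht).trans (add_integral_le_mul_exp_div hu hu0 hk0 hk hyp hε.1 hε.2 t ht)

end Gronwall

theorem le_mul_exp_integral_of_growth_le_above {u k G : ℝ → ℝ} {a b L : ℝ}
    (hu : ContinuousOn u (Icc a b)) (hu0 : ∀ t ∈ Icc a b, 0 ≤ u t)
    (hk0 : ∀ t ∈ Icc a b, 0 ≤ k t) (hk : IntegrableOn k (Icc a b)) (hG : IntegrableOn G (Icc a b))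
    (hua : u a ≤ L) (hint : ∀ t ∈ Icc a b, u t = u a + ∫ s in a..t, G s)
    (hG_le : ∀ t ∈ Icc a b, L < u t → G t ≤ k t * u t) :
    ∀ t ∈ Icc a b, u t ≤ L * exp (∫ s in a..t, k s) := by
  intro t ht
  have ha : a ∈ Icc a b := left_mem_Icc.2 (ht.1.trans ht.2)
  -- `t₀` is the last time before `t` at which `u ≤ L`
  have hT : IsClosed (Icc a t ∩ u ⁻¹' Iic L) :=
    (hu.mono (Icc_subset_Icc_right ht.2)).preimage_isClosed_of_isClosed isClosed_Icc isClosed_Iic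
  obtain ⟨t₀, ⟨ht₀, hut₀⟩, hlast⟩ := (isCompact_Icc.of_isClosed_subset hT inter_subset_left)
    |>.exists_isGreatest ⟨a, left_mem_Icc.2 ht.1, hua⟩
  have habove : ∀ s ∈ Ioo t₀ t, L < u s := fun s hs =>
    not_le.1 fun h => hs.1.not_ge (hlast ⟨⟨ht₀.1.trans hs.1.le, hs.2.le⟩, h⟩)
  have hsub : Icc t₀ t ⊆ Icc a b := Icc_subset_Icc ht₀.1 ht.2
  have hku : IntegrableOn (fun s => k s * u s) (Icc a b) := hk.mul_continuousOn hu isCompact_Icc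
  have hyp : ∀ x ∈ Icc t₀ t, u x ≤ L + ∫ s in t₀..x, k s * u s := by
    intro x hx
    have hxab := hsub hx
    have ht₀ab := hsub (left_mem_Icc.2 (hx.1.trans hx.2))
    have hux : u x = u t₀ + ∫ s in t₀..x, G s := by
      rw [hint x hxab, hint t₀ ht₀ab, add_assoc, intervalIntegral.integral_add_adjacent_intervals
        (hG.intervalIntegrable_of_mem_Icc ha ht₀ab) (hG.intervalIntegrable_of_mem_Icc ht₀ab hxab)]
    rw [hux]
    refine add_le_add hut₀ ?_
    exact intervalIntegral.integral_mono_on_of_le_Ioo hx.1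
      (hG.intervalIntegrable_of_mem_Icc ht₀ab hxab)
      (hku.intervalIntegrable_of_mem_Icc ht₀ab hxab) fun s hs =>
        hG_le s (hsub (Ioo_subset_Icc_self.trans (Icc_subset_Icc_right hx.2) hs))
          (habove s ⟨hs.1, hs.2.trans_le hx.2⟩)
  have hL : 0 ≤ L := (hu0 a ha).trans hua
  calc u t ≤ L * exp (∫ s in t₀..t, k s) :=
        le_mul_exp_integral_of_le_add_integral (hu.mono hsub) (fun s hs => hu0 s (hsub hs))
          (fun s hs => hk0 s (hsub hs)) (hk.mono_set hsub) hyp t (right_mem_Icc.2 ht₀.2)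
    _ ≤ L * exp (∫ s in a..t, k s) := by
        gcongr
        exact intervalIntegral.integral_mono_interval ht₀.1 ht₀.2 le_rfl
          ((ae_restrict_mem measurableSet_Ioc).mono fun s hs =>
            hk0 s ⟨hs.1.le, hs.2.trans ht.2⟩) (hk.intervalIntegrable_of_mem_Icc ha ht)

lemma sq_integral_abs_le_integral_sq {α : Type*} [MeasurableSpace α] {μ : Measure α}
    [IsProbabilityMeasure μ] {f : α → ℝ} (hf : Integrable f μ)
    (hf2 : Integrable (fun x => f x ^ 2) μ) :
    (∫ x, |f x| ∂μ) ^ 2 ≤ ∫ x, f x ^ 2 ∂μ := by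
  set m := ∫ x, |f x| ∂μ
  have hpt : ∀ x, 2 * m * |f x| ≤ f x ^ 2 + m ^ 2 := fun x => by
    nlinarith [sq_nonneg (|f x| - m), sq_abs (f x)]
  have := integral_mono (f := fun x => 2 * m * |f x|) (g := fun x => f x ^ 2 + m ^ 2)
    (hf.abs.const_mul (2 * m)) (hf2.add (integrable_const (m ^ 2))) hpt
  rw [integral_const_mul, integral_add hf2 (integrable_const _)] at this
  simp only [integral_const, probReal_univ, one_smul] at this
  nlinarith

lemma intervalIntegral_abs_le_sqrt_integral_sq {f : ℝ → ℝ} (hf : IntervalIntegrable f volume 0 1)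
    (hf2 : IntervalIntegrable (fun s => f s ^ 2) volume 0 1) :
    ∫ s in (0:ℝ)..1, |f s| ≤ sqrt (∫ s in (0:ℝ)..1, f s ^ 2) := by
  have : IsProbabilityMeasure (volume.restrict (Ioc (0:ℝ) 1)) := ⟨by simp⟩
  rw [intervalIntegral.integral_of_le zero_le_one, intervalIntegral.integral_of_le zero_le_one]
  exact le_sqrt_of_sq_le (sq_integral_abs_le_integral_sq hf.1 hf2.1)

lemma mul_rpow_neg_le_self {β M g x : ℝ} (hβ : 0 < 1 + β) (hg : 0 ≤ g) (hgM : g ≤ M)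
    (hx : 0 < x) (hMx : M ^ (1 / (1 + β)) ≤ x) : g * x ^ (-β) ≤ x := by
  have hM : M ≤ x ^ (1 + β) := by
    calc M = (M ^ (1 + β)⁻¹) ^ (1 + β) := (rpow_inv_rpow (hg.trans hgM) hβ.ne').symm
      _ ≤ x ^ (1 + β) := by rw [← one_div]; gcongr; exact rpow_nonneg (hg.trans hgM) _
  calc g * x ^ (-β) ≤ x ^ (1 + β) * x ^ (-β) := by gcongr; exact hgM.trans hM
    _ = x := by rw [← rpow_add hx]; simp

/-- Upper bound (4.3) of Lemma 4.2 for the controlled (skeleton) inhibitor equation. -/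
theorem stmt_6 (β : ℝ) (hβ : 0 < β) :
    ∃ C > (0:ℝ), ∀ (ζ : ℝ), 0 < ζ → ∀ (f : ℝ → ℝ),
      IntervalIntegrable f volume 0 1 →
      IntervalIntegrable (fun s => f s ^ 2) volume 0 1 →
      ∀ (h : ℝ → ℝ), (∀ t, h t = ∫ s in (0:ℝ)..t, f s) →
      ∀ (g ξ : ℝ → ℝ),
      ContinuousOn g (Icc 0 1) → (∀ t ∈ Icc (0:ℝ) 1, 0 ≤ g t) →
      ContinuousOn ξ (Icc 0 1) → (∀ t ∈ Icc (0:ℝ) 1, 0 < ξ t) →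
      ξ 0 = ζ →
      (∀ t ∈ Icc (0:ℝ) 1,
        ξ t = ζ + ∫ s in (0:ℝ)..t, (-ξ s + g s * ξ s ^ (-β) + ξ s * f s)) →
      ∀ t ∈ Icc (0:ℝ) 1,
        ξ t ≤ C * (Real.exp (Real.sqrt (∫ s in (0:ℝ)..1, f s ^ 2)) * ζ
          + Real.exp (2 * Real.sqrt (∫ s in (0:ℝ)..1, f s ^ 2))
              * (sSup (g '' Icc (0:ℝ) 1)) ^ (1 / (1 + β))) := by
  refine ⟨1, one_pos, fun ζ hζ f hf hf2 _ _ g ξ hg hg0 hξc hξpos hξ0 hξ t ht => ?_⟩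
  set N := sqrt (∫ s in (0:ℝ)..1, f s ^ 2)
  set K := sSup (g '' Icc (0:ℝ) 1) ^ (1 / (1 + β))
  have hgM : ∀ s ∈ Icc (0:ℝ) 1, g s ≤ sSup (g '' Icc 0 1) := fun s hs =>
    le_csSup (isCompact_Icc.image_of_continuousOn hg).bddAbove (mem_image_of_mem g hs)
  have hK : 0 ≤ K := rpow_nonneg ((hg0 0 (left_mem_Icc.2 zero_le_one)).trans
    (hgM 0 (left_mem_Icc.2 zero_le_one))) _
  have hfI : IntegrableOn f (Icc 0 1) :=
    (intervalIntegrable_iff_integrableOn_Icc_of_le zero_le_one).1 hf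
  have hGI : IntegrableOn (fun s => -ξ s + g s * ξ s ^ (-β) + ξ s * f s) (Icc 0 1) :=
    (ContinuousOn.integrableOn_Icc (hξc.neg.add (hg.mul (hξc.rpow_const fun s hs =>
      .inl (hξpos s hs).ne')))).add (hfI.continuousOn_mul hξc isCompact_Icc)
  have hgrowth : ∀ s ∈ Icc (0:ℝ) 1, max ζ K < ξ s →
      -ξ s + g s * ξ s ^ (-β) + ξ s * f s ≤ |f s| * ξ s := fun s hs hlt => by
    have := mul_rpow_neg_le_self (by linarith) (hg0 s hs) (hgM s hs) (hξpos s hs)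
      ((le_max_right _ _).trans hlt.le)
    nlinarith [le_abs_self (f s), hξpos s hs]
  have hbound := le_mul_exp_integral_of_growth_le_above hξc (fun s hs => (hξpos s hs).le)
    (fun _ _ => abs_nonneg _) hfI.abs hGI (hξ0.trans_le (le_max_left ζ K))
    (fun s hs => hξ0 ▸ hξ s hs) hgrowth t ht
  have hfN : ∫ s in (0:ℝ)..t, |f s| ≤ N :=
    (intervalIntegral.integral_mono_interval le_rfl ht.1 ht.2 (.of_forall fun _ => abs_nonneg _)
      hf.abs).trans (intervalIntegral_abs_le_sqrt_integral_sq hf hf2)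
  have hN : exp N ≤ exp (2 * N) :=
    exp_le_exp.2 (by linarith [sqrt_nonneg (∫ s in (0:ℝ)..1, f s ^ 2)])
  calc ξ t ≤ max ζ K * exp (∫ s in (0:ℝ)..t, |f s|) := hbound
    _ ≤ (ζ + K) * exp N := by gcongr; exact max_le (by linarith) (by linarith)
    _ ≤ 1 * (exp N * ζ + exp (2 * N) * K) := by nlinarith [exp_pos N]
end

section
/- Let β > 0, ζ > 0, N > 0 and 0 < ε with εβ < 2. Let b : [0,1] → ℝ be continuous with b(0) = 0, let f ∈ L²([0,1];ℝ) with ‖f‖_{L²([0,1])} ≤ N, set h(t) = ∫₀^t f(s) ds, let g : [0,1] → ℝ be continuous and nonnegative, and let ξ : [0,1] → ℝ be continuous and positive such that for every t ∈ [0,1], ξ(t)^{1+β} = e^{-(1+β)(2-εβ)t/2 + (1+β)h(t) + √ε(1+β)b(t)} ζ^{1+β} + (1+β) ∫₀^t e^{-(1+β)(2-εβ)(t-s)/2 + (1+β)(h(t)-h(s)) + √ε(1+β)(b(t)-b(s))} g(s) ds. Then ξ(t) ≥ e^{-(2-εβ)t/2 - N + √ε b(t)} ζ for all t ∈ [0,1].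 -/
/-!
Dropping the nonnegative memory integral leaves
`ξ(t)^{1+β} ≥ (exp(-(2-εβ)t/2 + h(t) + √ε b(t)) ζ)^{1+β}`, so taking `(1+β)`-th roots
bounds `ξ(t)` below by `exp(-(2-εβ)t/2 + h(t) + √ε b(t)) ζ`. The control is small:
by Cauchy–Schwarz `h(t)² ≤ t ∫₀ᵗ f² ≤ ‖f‖²_{L²} ≤ N²`, hence `h(t) ≥ -N`.
-/

open MeasureTheory Set Real

theorem sq_intervalIntegral_le_mul_integral_sq {f : ℝ → ℝ} {a b : ℝ} (hab : a ≤ b)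
    (hf : IntervalIntegrable f volume a b)
    (hf2 : IntervalIntegrable (fun s => f s ^ 2) volume a b) :
    (∫ s in a..b, f s) ^ 2 ≤ (b - a) * ∫ s in a..b, f s ^ 2 := by
  have hquad : ∀ x : ℝ,
      0 ≤ (b - a) * (x * x) + (-2 * ∫ s in a..b, f s) * x + ∫ s in a..b, f s ^ 2 := by
    intro x
    have hexpand : ∫ s in a..b, (x - f s) ^ 2
        = (b - a) * (x * x) + (-2 * ∫ s in a..b, f s) * x + ∫ s in a..b, f s ^ 2 := by
      have hlin : IntervalIntegrable (fun s => x * x - 2 * x * f s) volume a b :=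
        intervalIntegrable_const.sub (hf.const_mul _)
      simp_rw [show ∀ s, (x - f s) ^ 2 = (x * x - 2 * x * f s) + f s ^ 2 from fun s => by ring]
      rw [intervalIntegral.integral_add hlin hf2, intervalIntegral.integral_sub
        intervalIntegrable_const (hf.const_mul _), intervalIntegral.integral_const_mul (2 * x) f,
        intervalIntegral.integral_const, smul_eq_mul]
      ring
    rw [← hexpand]
    exact intervalIntegral.integral_nonneg hab fun s _ => sq_nonneg _
  have := discrim_le_zero hquad
  rw [discrim] at this
  linarith

theorem abs_intervalIntegral_le_of_sqrt_integral_sq_le {f : ℝ → ℝ} {N t : ℝ}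
    (hf : IntervalIntegrable f volume 0 1)
    (hf2 : IntervalIntegrable (fun s => f s ^ 2) volume 0 1)
    (hfN : √(∫ s in (0:ℝ)..1, f s ^ 2) ≤ N) (ht : t ∈ Icc (0:ℝ) 1) :
    |∫ s in (0:ℝ)..t, f s| ≤ N := by
  have hsub : uIcc 0 t ⊆ uIcc (0:ℝ) 1 := uIcc_subset_uIcc left_mem_uIcc (by simpa [uIcc_of_le])
  have htail : 0 ≤ ∫ s in t..1, f s ^ 2 :=
    intervalIntegral.integral_nonneg ht.2 fun s _ => sq_nonneg _
  have hmono : ∫ s in (0:ℝ)..t, f s ^ 2 ≤ ∫ s in (0:ℝ)..1, f s ^ 2 := by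
    rw [← intervalIntegral.integral_add_adjacent_intervals (hf2.mono_set hsub)
      (hf2.mono_set (uIcc_subset_uIcc (by simpa [uIcc_of_le]) right_mem_uIcc))]
    linarith
  refine le_trans (abs_le_sqrt ?_) hfN
  calc (∫ s in (0:ℝ)..t, f s) ^ 2 ≤ (t - 0) * ∫ s in (0:ℝ)..t, f s ^ 2 :=
        sq_intervalIntegral_le_mul_integral_sq ht.1 (hf.mono_set hsub) (hf2.mono_set hsub)
    _ ≤ 1 * ∫ s in (0:ℝ)..1, f s ^ 2 := by
        gcongr
        · exact intervalIntegral.integral_nonneg ht.1 fun s _ => sq_nonneg _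
        · linarith [ht.2]
    _ = ∫ s in (0:ℝ)..1, f s ^ 2 := one_mul _

theorem exp_mul_le_of_rpow_eq_exp_mul_add {p c ζ x R : ℝ} (hp : 0 < p) (hζ : 0 ≤ ζ)
    (hx : 0 ≤ x) (hR : 0 ≤ R) (heq : x ^ p = exp (p * c) * ζ ^ p + R) :
    exp c * ζ ≤ x := by
  rw [← rpow_le_rpow_iff (by positivity) hx hp, mul_rpow (exp_pos c).le hζ, ← exp_mul, mul_comm c]
  linarith

theorem stmt_8_general (β ζ N ε : ℝ) (hβ : 0 < β) (hζ : 0 < ζ)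
    (b : ℝ → ℝ)
    (f : ℝ → ℝ)
    (hf : IntervalIntegrable f volume 0 1)
    (hf2 : IntervalIntegrable (fun s => f s ^ 2) volume 0 1)
    (hfN : Real.sqrt (∫ s in (0:ℝ)..1, f s ^ 2) ≤ N)
    (h : ℝ → ℝ) (hdef : ∀ t, h t = ∫ s in (0:ℝ)..t, f s)
    (g ξ : ℝ → ℝ)
    (hgpos : ∀ t ∈ Icc (0:ℝ) 1, 0 ≤ g t)
    (hξpos : ∀ t ∈ Icc (0:ℝ) 1, 0 < ξ t)
    (heq : ∀ t ∈ Icc (0:ℝ) 1,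
      ξ t ^ (1 + β) =
        Real.exp (-(1 + β) * (2 - ε * β) * t / 2 + (1 + β) * h t
            + Real.sqrt ε * (1 + β) * b t) * ζ ^ (1 + β)
        + (1 + β) * ∫ s in (0:ℝ)..t,
            Real.exp (-(1 + β) * (2 - ε * β) * (t - s) / 2
              + (1 + β) * (h t - h s) + Real.sqrt ε * (1 + β) * (b t - b s)) * g s) :
    ∀ t ∈ Icc (0:ℝ) 1,
      Real.exp (-(2 - ε * β) * t / 2 - N + Real.sqrt ε * b t) * ζ ≤ ξ t := by
  intro t ht
  have hh : -N ≤ h t := by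
    rw [hdef]
    exact neg_le_of_abs_le (abs_intervalIntegral_le_of_sqrt_integral_sq_le hf hf2 hfN ht)
  have hmemory : 0 ≤ ∫ s in (0:ℝ)..t,
      exp (-(1 + β) * (2 - ε * β) * (t - s) / 2
        + (1 + β) * (h t - h s) + √ε * (1 + β) * (b t - b s)) * g s :=
    intervalIntegral.integral_nonneg ht.1 fun s hs =>
      mul_nonneg (exp_pos _).le (hgpos s ⟨hs.1, hs.2.trans ht.2⟩)
  have hroot : exp (-(2 - ε * β) * t / 2 + h t + √ε * b t) * ζ ≤ ξ t := by
    refine exp_mul_le_of_rpow_eq_exp_mul_add (p := 1 + β) (by linarith) hζ.le (hξpos t ht).le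
      (mul_nonneg (by linarith : (0:ℝ) ≤ 1 + β) hmemory) ?_
    rw [heq t ht]
    congr 3
    ring
  exact le_trans (mul_le_mul_of_nonneg_right (exp_le_exp.2 (by linarith)) hζ.le) hroot

/-- Pathwise form of inequality (4.24): lower bound for the controlled
stochastic inhibitor. -/
theorem stmt_8 (β ζ N ε : ℝ) (hβ : 0 < β) (hζ : 0 < ζ) (hN : 0 < N)
    (hε : 0 < ε) (hεβ : ε * β < 2)
    (b : ℝ → ℝ) (hb : ContinuousOn b (Icc 0 1)) (hb0 : b 0 = 0)
    (f : ℝ → ℝ)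
    (hf : IntervalIntegrable f volume 0 1)
    (hf2 : IntervalIntegrable (fun s => f s ^ 2) volume 0 1)
    (hfN : Real.sqrt (∫ s in (0:ℝ)..1, f s ^ 2) ≤ N)
    (h : ℝ → ℝ) (hdef : ∀ t, h t = ∫ s in (0:ℝ)..t, f s)
    (g ξ : ℝ → ℝ)
    (hg : ContinuousOn g (Icc 0 1)) (hgpos : ∀ t ∈ Icc (0:ℝ) 1, 0 ≤ g t)
    (hξ : ContinuousOn ξ (Icc 0 1)) (hξpos : ∀ t ∈ Icc (0:ℝ) 1, 0 < ξ t)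
    (heq : ∀ t ∈ Icc (0:ℝ) 1,
      ξ t ^ (1 + β) =
        Real.exp (-(1 + β) * (2 - ε * β) * t / 2 + (1 + β) * h t
            + Real.sqrt ε * (1 + β) * b t) * ζ ^ (1 + β)
        + (1 + β) * ∫ s in (0:ℝ)..t,
            Real.exp (-(1 + β) * (2 - ε * β) * (t - s) / 2
              + (1 + β) * (h t - h s) + Real.sqrt ε * (1 + β) * (b t - b s)) * g s) :
    ∀ t ∈ Icc (0:ℝ) 1,
      Real.exp (-(2 - ε * β) * t / 2 - N + Real.sqrt ε * b t) * ζ ≤ ξ t :=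
  stmt_8_general β ζ N ε hβ hζ b f hf hf2 hfN h hdef g ξ hgpos hξpos heq
end

section
/- Let β > 0. There exists a constant C > 0 depending only on β such that the following holds. Let ζ > 0, N > 0 and 0 ≤ ε with εβ < 2. Let b : [0,1] → ℝ be continuous with b(0) = 0 and write b*_1 = sup_{0≤s≤1} |b(s)|. Let f ∈ L²([0,1];ℝ) with ‖f‖_{L²([0,1])} ≤ N, set h(t) = ∫₀^t f(s) ds, let g : [0,1] → ℝ be continuous and nonnegative, and let ξ : [0,1] → ℝ be continuous and positive such that for every t ∈ [0,1], ξ(t)^{1+β} = e^{-(1+β)(2-εβ)t/2 + (1+β)h(t) + √ε(1+β)b(t)} ζ^{1+β} + (1+β) ∫₀^t e^{-(1+β)(2-εβ)(t-s)/2 + (1+β)(h(t)-h(s)) + √ε(1+β)(b(t)-b(s))} g(s) ds. Then sup_{0≤t≤1} ξ(t) ≤ C ( e^{N + √ε b*_1} ζ + e^{N + 2√ε b*_1} ( sup_{0≤t≤1} g(t) )^{1/(1+β)} ). -/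
/-!
By Cauchy–Schwarz, `h t - h s ≤ ‖f‖_{L²} ≤ N` for `s ≤ t`, and `|b t - b s| ≤ 2 b*₁`; the drift
`-(1 + β)(2 - εβ)(t - s)/2` is nonpositive because `εβ < 2`. So the first term of the identity is at
most `(e^{N + √ε b*₁} ζ)^{1+β}` and the kernel at most `(e^{N + 2√ε b*₁})^{1+β}`. Taking the
`(1 + β)`-th root, which is subadditive, gives the bound with `C = 1 + β`.
-/

open MeasureTheory Set Real

theorem sq_intervalIntegral_le {f : ℝ → ℝ} {a b : ℝ} (hab : a ≤ b)
    (hf : IntervalIntegrable f volume a b) (hf2 : IntervalIntegrable (fun x => f x ^ 2) volume a b) :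
    (∫ x in a..b, f x) ^ 2 ≤ (b - a) * ∫ x in a..b, f x ^ 2 := by
  -- the quadratic `c ↦ ∫ (f - c) ^ 2` is nonnegative, so its discriminant is nonpositive
  have hquad : ∀ c : ℝ, 0 ≤ (b - a) * (c * c) + (-2 * ∫ x in a..b, f x) * c
      + ∫ x in a..b, f x ^ 2 := by
    intro c
    have hexpand : ∫ x in a..b, (f x - c) ^ 2
        = (b - a) * (c * c) + (-2 * ∫ x in a..b, f x) * c + ∫ x in a..b, f x ^ 2 := by
      have hsq : (fun x => (f x - c) ^ 2) = fun x => f x ^ 2 - 2 * c * f x + c ^ 2 := by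
        funext x; ring
      rw [hsq, intervalIntegral.integral_add (hf2.sub (hf.const_mul _)) intervalIntegrable_const,
        intervalIntegral.integral_sub hf2 (hf.const_mul _), intervalIntegral.integral_const_mul,
        intervalIntegral.integral_const, smul_eq_mul]
      ring
    exact hexpand ▸ intervalIntegral.integral_nonneg hab fun x _ => sq_nonneg _
  have hdisc := discrim_le_zero hquad
  rw [discrim] at hdisc
  linarith

theorem abs_integral_sub_integral_le {f : ℝ → ℝ} {a b s t : ℝ} (has : a ≤ s) (hst : s ≤ t)
    (htb : t ≤ b) (hf : IntervalIntegrable f volume a b)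
    (hf2 : IntervalIntegrable (fun x => f x ^ 2) volume a b) :
    |(∫ x in a..t, f x) - ∫ x in a..s, f x| ≤ √((b - a) * ∫ x in a..b, f x ^ 2) := by
  have hsub : ∀ {c d}, a ≤ c → c ≤ d → d ≤ b → uIcc c d ⊆ uIcc a b := fun hac hcd hdb =>
    uIcc_subset_uIcc (mem_uIcc_of_le hac (hcd.trans hdb)) (mem_uIcc_of_le (hac.trans hcd) hdb)
  rw [intervalIntegral.integral_interval_sub_left (hf.mono_set (hsub le_rfl (has.trans hst) htb))
    (hf.mono_set (hsub le_rfl has (hst.trans htb)))]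
  refine Real.abs_le_sqrt ?_
  calc (∫ x in s..t, f x) ^ 2
      ≤ (t - s) * ∫ x in s..t, f x ^ 2 :=
        sq_intervalIntegral_le hst (hf.mono_set (hsub has hst htb)) (hf2.mono_set (hsub has hst htb))
    _ ≤ (b - a) * ∫ x in a..b, f x ^ 2 :=
        mul_le_mul (by linarith)
          (intervalIntegral.integral_mono_interval has hst htb (ae_of_all _ fun x => sq_nonneg _) hf2)
          (intervalIntegral.integral_nonneg hst fun x _ => sq_nonneg _) (by linarith)

theorem exp_le_exp_add_mul_rpow {p c τ x N σ y K : ℝ} (hp : 0 ≤ p) (hc : 0 ≤ c) (hτ : 0 ≤ τ)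
    (hx : x ≤ N) (hσ : 0 ≤ σ) (hy : y ≤ K) :
    exp (-p * c * τ / 2 + p * x + σ * p * y) ≤ exp (N + σ * K) ^ p := by
  rw [← exp_mul, exp_le_exp]
  nlinarith [mul_nonneg (mul_nonneg hp hc) hτ, mul_le_mul_of_nonneg_left hx hp,
    mul_le_mul_of_nonneg_left hy (mul_nonneg hσ hp)]

theorem le_add_rpow_one_div_of_rpow_le_add {p x a B : ℝ} (hp : 1 ≤ p) (hx : 0 ≤ x) (ha : 0 ≤ a)
    (hB : 0 ≤ B) (h : x ^ p ≤ a ^ p + B) : x ≤ a + B ^ (1 / p) := by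
  have hp0 : 0 < p := zero_lt_one.trans_le hp
  have hroot : ∀ {y : ℝ}, 0 ≤ y → (y ^ p) ^ (1 / p) = y := fun hy => by
    rw [← rpow_mul hy, mul_one_div_cancel hp0.ne', rpow_one]
  calc x = (x ^ p) ^ (1 / p) := (hroot hx).symm
    _ ≤ (a ^ p + B) ^ (1 / p) := by gcongr
    _ ≤ (a ^ p) ^ (1 / p) + B ^ (1 / p) :=
        rpow_add_le_add_rpow (by positivity) hB (by positivity) (div_le_one_of_le₀ hp hp0.le)
    _ = a + B ^ (1 / p) := by rw [hroot ha]

theorem mul_rpow_mul_rpow_one_div_le {p E G : ℝ} (hp : 1 ≤ p) (hE : 0 ≤ E) (hG : 0 ≤ G) :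
    (p * (E ^ p * G)) ^ (1 / p) ≤ p * (E * G ^ (1 / p)) := by
  have hp0 : 0 < p := zero_lt_one.trans_le hp
  rw [mul_rpow hp0.le (by positivity), mul_rpow (by positivity) hG, ← rpow_mul hE,
    mul_one_div_cancel hp0.ne', rpow_one]
  gcongr
  exact rpow_le_self_of_one_le hp (div_le_one_of_le₀ hp hp0.le)

theorem intervalIntegral_le_of_abs_le {F : ℝ → ℝ} {C t : ℝ} (hC : 0 ≤ C) (ht : t ∈ Icc (0:ℝ) 1)
    (hF : ∀ s ∈ Ioc 0 t, |F s| ≤ C) : ∫ s in 0..t, F s ≤ C := by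
  have hnorm := intervalIntegral.norm_integral_le_of_norm_le_const (a := 0) (b := t) (C := C)
    (f := F) (by simpa [uIoc_of_le ht.1] using hF)
  rw [Real.norm_eq_abs, sub_zero, abs_of_nonneg ht.1] at hnorm
  exact (le_abs_self _).trans (hnorm.trans (mul_le_of_le_one_right hC ht.2))

theorem le_of_rpow_le_add_mul_integral {p x A B E G t : ℝ} {F : ℝ → ℝ} (hp : 1 ≤ p) (hx : 0 ≤ x)
    (hA : 0 ≤ A) (hE : 0 ≤ E) (hG : 0 ≤ G) (ht : t ∈ Icc (0:ℝ) 1)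
    (hxp : x ^ p ≤ B + p * ∫ s in 0..t, F s) (hB : B ≤ A ^ p)
    (hF : ∀ s ∈ Ioc 0 t, |F s| ≤ E ^ p * G) : x ≤ A + p * (E * G ^ (1 / p)) := by
  have hint : ∫ s in 0..t, F s ≤ E ^ p * G :=
    intervalIntegral_le_of_abs_le (by positivity) ht hF
  have hp0 : 0 ≤ p := zero_le_one.trans hp
  calc x ≤ A + (p * (E ^ p * G)) ^ (1 / p) :=
        le_add_rpow_one_div_of_rpow_le_add hp hx hA (by positivity) (hxp.trans (by gcongr))
    _ ≤ A + p * (E * G ^ (1 / p)) := by gcongr; exact mul_rpow_mul_rpow_one_div_le hp hE hG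

/-- Pathwise form of inequality (4.26): supremum upper bound for the controlled
stochastic inhibitor. -/
theorem stmt_10 (β : ℝ) (hβ : 0 < β) :
    ∃ C > (0:ℝ), ∀ (ζ N ε : ℝ), 0 < ζ → 0 < N → 0 ≤ ε → ε * β < 2 →
      ∀ (b : ℝ → ℝ), ContinuousOn b (Icc 0 1) → b 0 = 0 →
      ∀ (f : ℝ → ℝ),
      IntervalIntegrable f volume 0 1 →
      IntervalIntegrable (fun s => f s ^ 2) volume 0 1 →
      Real.sqrt (∫ s in (0:ℝ)..1, f s ^ 2) ≤ N →
      ∀ (h : ℝ → ℝ), (∀ t, h t = ∫ s in (0:ℝ)..t, f s) →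
      ∀ (g ξ : ℝ → ℝ),
      ContinuousOn g (Icc 0 1) → (∀ t ∈ Icc (0:ℝ) 1, 0 ≤ g t) →
      ContinuousOn ξ (Icc 0 1) → (∀ t ∈ Icc (0:ℝ) 1, 0 < ξ t) →
      (∀ t ∈ Icc (0:ℝ) 1,
        ξ t ^ (1 + β) =
          Real.exp (-(1 + β) * (2 - ε * β) * t / 2 + (1 + β) * h t
              + Real.sqrt ε * (1 + β) * b t) * ζ ^ (1 + β)
          + (1 + β) * ∫ s in (0:ℝ)..t,
              Real.exp (-(1 + β) * (2 - ε * β) * (t - s) / 2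
                + (1 + β) * (h t - h s) + Real.sqrt ε * (1 + β) * (b t - b s)) * g s) →
      sSup (ξ '' Icc (0:ℝ) 1) ≤
        C * (Real.exp (N + Real.sqrt ε * sSup ((fun s => |b s|) '' Icc (0:ℝ) 1)) * ζ
          + Real.exp (N + 2 * Real.sqrt ε * sSup ((fun s => |b s|) '' Icc (0:ℝ) 1))
              * (sSup (g '' Icc (0:ℝ) 1)) ^ (1 / (1 + β))) := by
  have hp : (1:ℝ) ≤ 1 + β := by linarith
  refine ⟨1 + β, by linarith, ?_⟩
  intro ζ N ε hζ _ hε hεβ b hbc _ f hfi hf2i hfN h hh g ξ hgc hg0 _ hξpos hξeq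
  set M := sSup ((fun s => |b s|) '' Icc (0:ℝ) 1)
  set G := sSup (g '' Icc (0:ℝ) 1)
  have hbM : ∀ t ∈ Icc (0:ℝ) 1, |b t| ≤ M := fun t ht =>
    le_csSup (isCompact_Icc.bddAbove_image hbc.abs) (mem_image_of_mem _ ht)
  have hgG : ∀ t ∈ Icc (0:ℝ) 1, g t ≤ G := fun t ht =>
    le_csSup (isCompact_Icc.bddAbove_image hgc) (mem_image_of_mem _ ht)
  have hG : 0 ≤ G := (hg0 0 ⟨le_rfl, zero_le_one⟩).trans (hgG 0 ⟨le_rfl, zero_le_one⟩)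
  have hinc : ∀ s t, 0 ≤ s → s ≤ t → t ≤ 1 → h t - h s ≤ N := fun s t hs hst ht => by
    rw [hh, hh]
    exact (le_abs_self _).trans
      ((abs_integral_sub_integral_le hs hst ht hfi hf2i).trans (by simpa using hfN))
  have hc : 0 ≤ 2 - ε * β := by linarith
  have hpt : ∀ t ∈ Icc (0:ℝ) 1, ξ t ≤ exp (N + √ε * M) * ζ
      + (1 + β) * (exp (N + 2 * √ε * M) * G ^ (1 / (1 + β))) := by
    intro t ht
    refine le_of_rpow_le_add_mul_integral hp (hξpos t ht).le (by positivity) (exp_pos _).le hG ht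
      (hξeq t ht).le ?_ (fun s hs => ?_)
    · rw [mul_rpow (exp_pos _).le hζ.le]
      gcongr
      refine exp_le_exp_add_mul_rpow (by linarith) hc ht.1 ?_ (sqrt_nonneg ε)
        ((le_abs_self _).trans (hbM t ht))
      simpa [hh 0] using hinc 0 t le_rfl ht.1 ht.2
    · have hs' : s ∈ Icc (0:ℝ) 1 := ⟨hs.1.le, hs.2.trans ht.2⟩
      rw [abs_of_nonneg (mul_nonneg (exp_pos _).le (hg0 s hs')), mul_assoc 2, mul_left_comm 2]
      refine mul_le_mul (exp_le_exp_add_mul_rpow (by linarith) hc (by linarith [hs.2])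
        (hinc s t hs'.1 hs.2 ht.2) (sqrt_nonneg ε) ?_) (hgG s hs') (hg0 s hs') (by positivity)
      linarith [le_abs_self (b t), neg_abs_le (b s), hbM t ht, hbM s hs']
  calc sSup (ξ '' Icc (0:ℝ) 1)
      ≤ exp (N + √ε * M) * ζ + (1 + β) * (exp (N + 2 * √ε * M) * G ^ (1 / (1 + β))) :=
        csSup_le ((nonempty_Icc.2 zero_le_one).image ξ) (forall_mem_image.2 hpt)
    _ ≤ _ := by
        rw [mul_add]
        gcongr ?_ + _
        exact le_mul_of_one_le_left (by positivity) hp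
end

section
/- Let η : [0,1] → ℝ be a nonnegative continuously differentiable function, let ψ : [0,1] → ℝ be nonnegative and integrable, let K ≥ 0 and σ ∈ (0,1), and write S = sup_{0≤t≤1} η(t). If η'(t) ≤ K ψ(t) S^σ for all t ∈ [0,1], then S ≤ max{ 1, ( η(0) + K ∫₀^1 ψ(s) ds )^{1/(1-σ)} }. -/
/-!
Integrating `η' ≤ K ψ S^σ` from `0` gives `η t ≤ η 0 + K (∫ ψ) S^σ` for every `t`, hence
`S ≤ η 0 + K (∫ ψ) S^σ`. If `S > 1` then `S^σ ≥ 1`, so `S ≤ (η 0 + K ∫ ψ) S^σ`, and dividing by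
`S^σ` gives `S^(1-σ) ≤ η 0 + K ∫ ψ`.
-/

open MeasureTheory Set Real

theorem le_add_intervalIntegral_of_hasDerivWithinAt_le {f f' g : ℝ → ℝ} {a b t : ℝ} (hab : a ≤ b)
    (hf : ∀ x ∈ Icc a b, HasDerivWithinAt f (f' x) (Icc a b) x)
    (hg : IntervalIntegrable g volume a b) (hg0 : ∀ x ∈ Icc a b, 0 ≤ g x)
    (hf'g : ∀ x ∈ Icc a b, f' x ≤ g x) (ht : t ∈ Icc a b) :
    f t ≤ f a + ∫ x in a..b, g x := by
  have hsub : Icc a t ⊆ Icc a b := Icc_subset_Icc le_rfl ht.2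
  have hgt : IntegrableOn g (Icc a t) :=
    ((intervalIntegrable_iff_integrableOn_Icc_of_le hab).1 hg).mono_set hsub
  have hft : f t - f a ≤ ∫ x in a..t, g x :=
    intervalIntegral.sub_le_integral_of_hasDeriv_right_of_le ht.1
      (fun x hx => (hf x (hsub hx)).continuousWithinAt.mono hsub)
      (fun x hx => (hf x (hsub (Ioo_subset_Icc_self hx))).mono_of_mem_nhdsWithin
        (Icc_mem_nhdsGT_of_mem ⟨hx.1.le, hx.2.trans_le ht.2⟩))
      hgt (fun x hx => hf'g x (hsub (Ioo_subset_Icc_self hx)))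
  have hmono : ∫ x in a..t, g x ≤ ∫ x in a..b, g x :=
    intervalIntegral.integral_mono_interval le_rfl ht.1 ht.2
      ((ae_restrict_mem measurableSet_Ioc).mono fun x hx => hg0 x ⟨hx.1.le, hx.2⟩) hg
  linarith

theorem le_rpow_of_le_mul_rpow {S A σ : ℝ} (hS : 0 < S) (hσ : σ < 1) (h : S ≤ A * S ^ σ) :
    S ≤ A ^ (1 / (1 - σ)) := by
  have hσ' : 0 < 1 - σ := sub_pos.2 hσ
  have hpow : S ^ (1 - σ) ≤ A := by
    rwa [rpow_sub hS, rpow_one, div_le_iff₀ (rpow_pos_of_pos hS σ)]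
  calc S = (S ^ (1 - σ)) ^ (1 / (1 - σ)) := by
        rw [← rpow_mul hS.le, mul_one_div_cancel hσ'.ne', rpow_one]
    _ ≤ A ^ (1 / (1 - σ)) := rpow_le_rpow (rpow_nonneg hS.le _) hpow (by positivity)

theorem le_max_one_rpow_of_le_add_mul_rpow {S C B σ : ℝ} (hC : 0 ≤ C) (hσ0 : 0 ≤ σ) (hσ1 : σ < 1)
    (h : S ≤ C + B * S ^ σ) : S ≤ max 1 ((C + B) ^ (1 / (1 - σ))) := by
  rcases le_or_gt S 1 with hS | hS
  · exact le_max_of_le_left hS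
  · refine le_max_of_le_right (le_rpow_of_le_mul_rpow (by linarith) hσ1 ?_)
    -- for `S ≥ 1` the constant `C` is absorbed into `C * S ^ σ`
    have : 1 ≤ S ^ σ := one_le_rpow hS.le hσ0
    nlinarith

theorem stmt_17_general (η η' ψ : ℝ → ℝ) (K σ : ℝ) (hK : 0 ≤ K) (hσ : σ ∈ Ioo (0:ℝ) 1)
    (hηnn : ∀ t ∈ Icc (0:ℝ) 1, 0 ≤ η t)
    (hηd : ∀ t ∈ Icc (0:ℝ) 1, HasDerivWithinAt η (η' t) (Icc 0 1) t)
    (hψnn : ∀ t ∈ Icc (0:ℝ) 1, 0 ≤ ψ t)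
    (hψint : IntervalIntegrable ψ volume 0 1)
    (hineq : ∀ t ∈ Icc (0:ℝ) 1,
      η' t ≤ K * ψ t * (sSup (η '' Icc (0:ℝ) 1)) ^ σ) :
    sSup (η '' Icc (0:ℝ) 1) ≤
      max 1 ((η 0 + K * ∫ s in (0:ℝ)..1, ψ s) ^ (1 / (1 - σ))) := by
  set S := sSup (η '' Icc (0:ℝ) 1)
  have h0 : (0:ℝ) ∈ Icc (0:ℝ) 1 := ⟨le_rfl, zero_le_one⟩
  have hbdd : BddAbove (η '' Icc (0:ℝ) 1) :=
    (isCompact_Icc.image_of_continuousOn fun t ht => (hηd t ht).continuousWithinAt).bddAbove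
  have hS0 : 0 ≤ S := (hηnn 0 h0).trans (le_csSup hbdd (mem_image_of_mem η h0))
  have hbound : ∀ t ∈ Icc (0:ℝ) 1, η t ≤ η 0 + K * (∫ s in (0:ℝ)..1, ψ s) * S ^ σ := by
    intro t ht
    have := le_add_intervalIntegral_of_hasDerivWithinAt_le zero_le_one hηd
      ((hψint.const_mul K).mul_const (S ^ σ))
      (fun x hx => by have := hψnn x hx; positivity) hineq ht
    rwa [intervalIntegral.integral_mul_const, intervalIntegral.integral_const_mul] at this
  have hS : S ≤ η 0 + K * (∫ s in (0:ℝ)..1, ψ s) * S ^ σ :=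
    csSup_le (image_nonempty.2 (nonempty_of_mem h0)) (forall_mem_image.2 hbound)
  exact le_max_one_rpow_of_le_add_mul_rpow (hηnn 0 h0) hσ.1.le hσ.2 hS

/-- Analytic core of the a priori energy estimates in Lemmas 3.4 and 4.12. -/
theorem stmt_17 (η η' ψ : ℝ → ℝ) (K σ : ℝ) (hK : 0 ≤ K) (hσ : σ ∈ Ioo (0:ℝ) 1)
    (hηnn : ∀ t ∈ Icc (0:ℝ) 1, 0 ≤ η t)
    (hηd : ∀ t ∈ Icc (0:ℝ) 1, HasDerivWithinAt η (η' t) (Icc 0 1) t)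
    (hη'c : ContinuousOn η' (Icc 0 1))
    (hψnn : ∀ t ∈ Icc (0:ℝ) 1, 0 ≤ ψ t)
    (hψint : IntervalIntegrable ψ volume 0 1)
    (hineq : ∀ t ∈ Icc (0:ℝ) 1,
      η' t ≤ K * ψ t * (sSup (η '' Icc (0:ℝ) 1)) ^ σ) :
    sSup (η '' Icc (0:ℝ) 1) ≤
      max 1 ((η 0 + K * ∫ s in (0:ℝ)..1, ψ s) ^ (1 / (1 - σ))) :=
  stmt_17_general η η' ψ K σ hK hσ hηnn hηd hψnn hψint hineq
end
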